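/- arXiv:1510.07539 — 3 statements merged into one kernel-verified Lean document; each statement's English description precedes it below -/
import Mathlib

section
/- Let n ≥ 1 and let S be a skew Boolean algebra freely generated (over the variety of all skew Boolean algebras) by a set of n distinct elements. Then S is finite and its cardinality is |S| = ∏_{m=1}^{n} (m²+1)^{C(n,m)}, where C(n,m) is the binomial coefficient. -/
universe u

/-- A skew Boolean algebra. -/
class SBA (S : Type u) where
  wedge : S → S → S
  vee : S → S → S
  diff : S → S → S
  zero : S
  wedge_assoc : ∀ x y z : S, wedge (wedge x y) z = wedge x (wedge y z)
  vee_assoc : ∀ x y z : S, vee (vee x y) z = vee x (vee y z)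
  absorb1 : ∀ x y : S, wedge x (vee x y) = x
  absorb2 : ∀ x y : S, wedge (vee y x) x = x
  absorb3 : ∀ x y : S, vee x (wedge x y) = x
  absorb4 : ∀ x y : S, vee (wedge y x) x = x
  sdistrib1 : ∀ x y z : S, wedge x (vee y z) = vee (wedge x y) (wedge x z)
  sdistrib2 : ∀ x y z : S, wedge (vee x y) z = vee (wedge x z) (wedge y z)
  zero_wedge : ∀ x : S, wedge zero x = zero
  wedge_zero : ∀ x : S, wedge x zero = zero
  zero_vee : ∀ x : S, vee zero x = x
  vee_zero : ∀ x : S, vee x zero = x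
  diff_ax1 : ∀ x y : S, vee (wedge (wedge x y) x) (diff x y) = x
  diff_ax2 : ∀ x y : S, wedge (wedge (wedge x y) x) (diff x y) = zero
  diff_ax3 : ∀ x y : S, wedge (diff x y) (wedge (wedge x y) x) = zero

namespace SBA

scoped infixl:70 " ⋏ " => SBA.wedge
scoped infixl:65 " ⋎ " => SBA.vee
scoped infixl:70 " ∖ " => SBA.diff

variable {S : Type u} [SBA S]

/-- Green's relation `D`: `x D y` iff `x⋏y⋏x = x` and `y⋏x⋏y = y`. -/
def Drel (x y : S) : Prop := x ⋏ y ⋏ x = x ∧ y ⋏ x ⋏ y = y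

/-- The natural partial order: `x ≤ y` iff `x⋏y = x = y⋏x`. -/
def nle (x y : S) : Prop := x ⋏ y = x ∧ y ⋏ x = x

/-- An atom: a nonzero element with nothing strictly between it and `0`. -/
def IsAtom (a : S) : Prop := a ≠ zero ∧ ∀ x : S, nle x a → x = zero ∨ x = a

/-- `X` generates `S`: the only subset of `S` containing `X` and `0` and closed
under the three operations is `S` itself. -/
def Generates (X : Set S) : Prop :=
  ∀ T : Set S, X ⊆ T → zero ∈ T →
    (∀ a b : S, a ∈ T → b ∈ T → a ⋏ b ∈ T ∧ a ⋎ b ∈ T ∧ a ∖ b ∈ T) →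
    T = Set.univ

/-- A homomorphism of skew Boolean algebras. -/
def IsHom {T : Type u} [SBA T] (f : S → T) : Prop :=
  (∀ a b : S, f (a ⋏ b) = f a ⋏ f b) ∧ (∀ a b : S, f (a ⋎ b) = f a ⋎ f b) ∧
    (∀ a b : S, f (a ∖ b) = f a ∖ f b) ∧ f zero = zero

end SBA

open SBA

/-- A left-handed skew Boolean algebra. -/
class LeftHanded (S : Type u) [SBA S] : Prop where
  lh_wedge : ∀ x y : S, x ⋏ y ⋏ x = x ⋏ y
  lh_vee : ∀ x y : S, x ⋎ y ⋎ x = y ⋎ x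

/-- `S` is freely generated by `X` over the variety of all skew Boolean algebras. -/
def FreelyGenerates (S : Type u) [SBA S] (X : Set S) : Prop :=
  Generates X ∧
    ∀ (T : Type u) [SBA T], ∀ g : X → T,
      ∃ f : S → T, IsHom f ∧ ∀ x : X, f x = g x

/-- `S` is freely generated by `X` over the variety of left-handed skew Boolean algebras. -/
def LFreelyGenerates (S : Type u) [SBA S] [LeftHanded S] (X : Set S) : Prop :=
  Generates X ∧
    ∀ (T : Type u) [SBA T] [LeftHanded T], ∀ g : X → T,
      ∃ f : S → T, IsHom f ∧ ∀ x : X, f x = g x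

/-!
For elements `x i` of a skew Boolean algebra and a set `A` of indices put
`e A = (⋀_{a ∈ A} x a) ∖ (⋁_{b ∉ A} x b)`. These atoms are pairwise orthogonal, and for fixed `A`
the cells `x a ⋏ e A ⋏ x b` (`a, b ∈ A`) multiply like the rectangular band `A × A`. So sending a
family `(p A)` in the product `M` of the primitive algebras `(A × A) ∪ {0}` to the orthogonal join
of the cells it selects is a homomorphism `M → S`. It maps the coordinate generators of `M` to the
`x i`: splitting `x i` successively along every `x j` shows `x i = ⋁_{A ∋ i} x i ⋏ e A ⋏ x i`.
When `S` is free on the `x i` this homomorphism inverts the one `S → M` given by freeness, so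
`|S| = ∏_A (|A| ^ 2 + 1)`.
-/

namespace SBA

section Basic

variable {S : Type*} [SBA S]

theorem wedge_self (a : S) : a ⋏ a = a := by
  simpa only [absorb3] using absorb1 a (a ⋏ a)

theorem wedge_wedge_self (a b : S) : a ⋏ b ⋏ b = a ⋏ b := by
  rw [wedge_assoc, wedge_self]

theorem wedge_wedge_eq_zero {a b : S} (h : b ⋏ a = zero) (w : S) : a ⋏ w ⋏ b = zero := by
  set z := a ⋏ w ⋏ b
  have hz : z = z ⋏ b ⋏ (a ⋏ z) := by
    simp only [z, ← wedge_assoc, wedge_self, wedge_wedge_self]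
  rwa [wedge_assoc, ← wedge_assoc b, h, zero_wedge, wedge_zero] at hz

/-- The natural preorder; `dle x y ∧ dle y x` is Green's relation `Drel x y`. -/
def dle (x y : S) : Prop := x ⋏ y ⋏ x = x

def Orthogonal (a b : S) : Prop := a ⋏ b = zero ∧ b ⋏ a = zero

theorem dle_refl (x : S) : dle x x := by
  rw [dle, wedge_self, wedge_self]

theorem nle.dle {x y : S} (h : nle x y) : dle x y := by
  rw [SBA.dle, h.1, wedge_self]

theorem nle.dle_trans {x y z : S} (hxy : nle x y) (hyz : SBA.dle y z) : SBA.dle x z :=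
  calc x ⋏ z ⋏ x = x ⋏ y ⋏ z ⋏ (y ⋏ x) := by rw [hxy.1, hxy.2]
    _ = x ⋏ (y ⋏ z ⋏ y) ⋏ x := by simp only [wedge_assoc]
    _ = x := by rw [hyz, hxy.1, wedge_self]

theorem dle_wedge_left (u v : S) : dle (u ⋏ v) u := by
  simp only [dle, ← wedge_assoc, wedge_wedge_self]
  rw [wedge_assoc, wedge_self]

theorem dle_wedge_right (u v : S) : dle (u ⋏ v) v := by
  simp only [dle, ← wedge_assoc, wedge_wedge_self]
  rw [wedge_assoc, wedge_self]

theorem dle_sandwich {e a : S} (h : dle e a) : dle e (a ⋏ e ⋏ a) :=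
  calc e ⋏ (a ⋏ e ⋏ a) ⋏ e = (e ⋏ a ⋏ e) ⋏ a ⋏ e := by simp only [wedge_assoc]
    _ = e := by rw [h, h]

theorem nle_sandwich (s a : S) : nle (s ⋏ a ⋏ s) s :=
  ⟨wedge_wedge_self _ _, by rw [← wedge_assoc, ← wedge_assoc, wedge_self]⟩

theorem eq_of_nle_of_dle {a b : S} (hab : nle a b) (hba : dle b a) : a = b :=
  calc a = b ⋏ a ⋏ b := by rw [wedge_assoc, hab.1, hab.2]
    _ = b := hba

theorem nle_diff (x y : S) : nle (x ∖ y) x := by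
  have hx := diff_ax1 x y
  constructor
  · calc (x ∖ y) ⋏ x = (x ∖ y) ⋏ (x ⋏ y ⋏ x ⋎ x ∖ y) := by rw [hx]
      _ = x ∖ y := by rw [sdistrib1, diff_ax3, wedge_self, zero_vee]
  · calc x ⋏ (x ∖ y) = (x ⋏ y ⋏ x ⋎ x ∖ y) ⋏ (x ∖ y) := by rw [hx]
      _ = x ∖ y := absorb2 _ _

theorem orthogonal_diff (x y : S) : Orthogonal (x ∖ y) y := by
  obtain ⟨hdx, hxd⟩ := nle_diff x y
  have h₁ : (x ∖ y) ⋏ y = zero := by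
    have h : (x ∖ y) ⋏ y ⋏ x = zero := by
      rw [← hdx, wedge_assoc (x ∖ y) x, wedge_assoc, diff_ax3]
    calc (x ∖ y) ⋏ y = ((x ∖ y) ⋏ y) ⋏ (x ⋏ (x ∖ y) ⋏ y) := by
          rw [hxd, wedge_self]
      _ = (x ∖ y) ⋏ y ⋏ x ⋏ ((x ∖ y) ⋏ y) := by simp only [wedge_assoc]
      _ = zero := by rw [h, zero_wedge]
  refine ⟨h₁, ?_⟩
  calc y ⋏ (x ∖ y) = y ⋏ (x ∖ y) ⋏ (y ⋏ (x ∖ y)) := (wedge_self _).symm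
    _ = y ⋏ ((x ∖ y) ⋏ y) ⋏ (x ∖ y) := by simp only [wedge_assoc]
    _ = zero := by rw [h₁, wedge_zero, zero_wedge]

theorem diff_eq_zero_iff {x y : S} : x ∖ y = zero ↔ dle x y := by
  constructor
  · intro h
    show x ⋏ y ⋏ x = x
    simpa only [h, vee_zero] using diff_ax1 x y
  · intro h
    have h₂ := diff_ax2 x y
    rw [h] at h₂
    rw [← (nle_diff x y).2, h₂]

theorem diff_zero (x : S) : x ∖ zero = x := by
  simpa only [wedge_zero, zero_wedge, zero_vee] using diff_ax1 x zero

theorem zero_diff (y : S) : zero ∖ y = zero := by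
  simpa only [zero_wedge, zero_vee] using diff_ax1 zero y

theorem dle_trans {x y z : S} (hxy : dle x y) (hyz : dle y z) : dle x z := by
  rw [← diff_eq_zero_iff]
  set d := x ∖ z
  have hdy : dle d y := (nle_diff x z).dle_trans hxy
  calc d = d ⋏ (y ⋏ z ⋏ y) ⋏ d := by rw [hyz, hdy]
    _ = d ⋏ y ⋏ z ⋏ (y ⋏ d) := by simp only [wedge_assoc]
    _ = zero := by rw [wedge_wedge_eq_zero (orthogonal_diff x z).2, zero_wedge]

theorem Orthogonal.symm {a b : S} (h : Orthogonal a b) : Orthogonal b a := ⟨h.2, h.1⟩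

theorem Orthogonal.vee_right {a b c : S} (hb : Orthogonal a b) (hc : Orthogonal a c) :
    Orthogonal a (b ⋎ c) :=
  ⟨by rw [sdistrib1, hb.1, hc.1, zero_vee], by rw [sdistrib2, hb.2, hc.2, zero_vee]⟩

theorem Orthogonal.of_dle_left {a b c : S} (hab : dle a b) (h : Orthogonal b c) :
    Orthogonal a c := by
  constructor
  · calc a ⋏ c = a ⋏ (b ⋏ a ⋏ c) := by rw [← wedge_assoc, ← wedge_assoc, hab]
      _ = zero := by rw [wedge_wedge_eq_zero h.2, wedge_zero]
  · calc c ⋏ a = c ⋏ (a ⋏ b ⋏ a) := by rw [hab]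
      _ = c ⋏ a ⋏ b ⋏ a := by simp only [wedge_assoc]
      _ = zero := by rw [wedge_wedge_eq_zero h.1, zero_wedge]

theorem diff_eq_of_orthogonal {x y v : S} (hx : x = x ⋏ y ⋏ x ⋎ v)
    (hv : Orthogonal (x ⋏ y ⋏ x) v) : x ∖ y = v := by
  set u := x ⋏ y ⋏ x
  have hd : x = u ⋎ x ∖ y := (diff_ax1 x y).symm
  have hvd : v = v ⋏ (x ∖ y) :=
    calc v = v ⋏ (u ⋎ v) := by rw [sdistrib1, hv.2, wedge_self, zero_vee]
      _ = v ⋏ (u ⋎ x ∖ y) := by rw [← hx, ← hd]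
      _ = v ⋏ (x ∖ y) := by rw [sdistrib1, hv.2, zero_vee]
  calc x ∖ y = (u ⋎ x ∖ y) ⋏ (x ∖ y) := (absorb2 _ _).symm
    _ = (u ⋎ v) ⋏ (x ∖ y) := by rw [← hx, ← hd]
    _ = v := by rw [sdistrib2, diff_ax2, zero_vee, ← hvd]

theorem Orthogonal.vee_comm {a b : S} (h : Orthogonal a b) : a ⋎ b = b ⋎ a := by
  set j := a ⋎ b
  have hjb : j ⋏ b ⋏ j = b := by
    rw [absorb2, sdistrib1, h.2, wedge_self, zero_vee]
  have hj : j = b ⋎ j ∖ b := by simpa only [hjb] using (diff_ax1 j b).symm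
  have hbd : b ⋏ (j ∖ b) = zero := by simpa only [hjb] using diff_ax2 j b
  have had : a = a ⋏ (j ∖ b) :=
    calc a = a ⋏ (b ⋎ j ∖ b) := by rw [← hj, absorb1]
      _ = a ⋏ (j ∖ b) := by rw [sdistrib1, h.1, zero_vee]
  have hda : j ∖ b = a ⋏ (j ∖ b) :=
    calc j ∖ b = j ⋏ (j ∖ b) := (nle_diff j b).2.symm
      _ = a ⋏ (j ∖ b) := by rw [sdistrib2, hbd, vee_zero]
  rw [hj, hda.trans had.symm]

theorem vee_eq_wedge_of_drel {p q : S} (h : Drel p q) : p ⋎ q = q ⋏ p := by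
  set j := p ⋎ q
  set t := q ⋏ p
  have hjt : j ⋏ t = t := by rw [← wedge_assoc, absorb2]
  have htj : t ⋏ j = t := by rw [wedge_assoc, absorb1]
  have hd : j = t ⋎ j ∖ t := by simpa only [hjt, htj] using (diff_ax1 j t).symm
  set d := j ∖ t
  have hdt : Orthogonal d t := orthogonal_diff j t
  have hdp : d ⋏ p = zero :=
    calc d ⋏ p = d ⋏ p ⋏ t := by rw [wedge_assoc, ← wedge_assoc p, h.1]
      _ = zero := wedge_wedge_eq_zero hdt.2 p
  have hdq : d ⋏ q = zero :=
    calc d ⋏ q = d ⋏ t ⋏ q := by rw [wedge_assoc, h.2]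
      _ = zero := by rw [hdt.1, zero_wedge]
  have hd0 : d = zero :=
    calc d = d ⋏ (p ⋎ q) := (nle_diff j t).1.symm
      _ = zero := by rw [sdistrib1, hdp, hdq, zero_vee]
  rw [hd, hd0, vee_zero]

theorem wedge_wedge_eq_wedge_of_wedge_eq {p x z : S} (hz : z ⋏ x = z) :
    p ⋏ x ⋏ z = p ⋏ z := by
  have hpz : p ⋏ z = p ⋏ x ⋏ p ⋏ z := by
    have hd : (p ∖ x) ⋏ z = zero := by
      rw [← hz, ← wedge_assoc, wedge_wedge_eq_zero (orthogonal_diff p x).2]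
    conv_lhs => rw [← diff_ax1 p x]
    rw [sdistrib2, hd, vee_zero]
  set α := p ⋏ x ⋏ z
  set β := p ⋏ x ⋏ p ⋏ z
  have hαβ : α ⋎ β = α := by
    rw [← sdistrib2, absorb3]
  have hβα : β ⋎ α = β := by
    have h := absorb3 (p ⋏ x ⋏ p) (p ⋏ x)
    rw [dle_wedge_left p x] at h
    rw [← sdistrib2, h]
  have hβz : β ⋎ z = z := absorb4 _ _
  calc α = α ⋏ z := by rw [wedge_wedge_self]
    _ = α ⋏ β ⋎ α := by rw [← hβz, sdistrib1, wedge_wedge_self]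
    _ = β ⋎ α := by rw [← hαβ, absorb2, hαβ]
    _ = p ⋏ z := by rw [hβα, hpz]

theorem dle_wedge {z u v : S} (hu : dle z u) (hv : dle z v) : dle z (u ⋏ v) :=
  calc z ⋏ (u ⋏ v) ⋏ z = z ⋏ u ⋏ z ⋏ (v ⋏ z) := by
        rw [wedge_wedge_eq_wedge_of_wedge_eq (wedge_wedge_self v z)]
        simp only [wedge_assoc]
    _ = z := by rw [hu, ← wedge_assoc, hv]

theorem dle_diff {p a b : S} (ha : dle p a) (hb : Orthogonal p b) : dle p (a ∖ b) := by
  have h : p ⋏ (a ⋏ b ⋏ a) = zero := by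
    rw [← wedge_assoc, ← wedge_assoc, wedge_wedge_eq_zero hb.2, zero_wedge]
  calc p ⋏ (a ∖ b) ⋏ p = p ⋏ (a ⋏ b ⋏ a ⋎ a ∖ b) ⋏ p := by
        rw [sdistrib1 p, h, zero_vee]
    _ = p := by rw [diff_ax1, ha]

end Basic

/-- Unlike `IsHom`, the two algebras may live in different universes, as for `ULift.down`. -/
structure IsSBAHom {S T : Type*} [SBA S] [SBA T] (f : S → T) : Prop where
  map_wedge : ∀ a b, f (a ⋏ b) = f a ⋏ f b
  map_vee : ∀ a b, f (a ⋎ b) = f a ⋎ f b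
  map_diff : ∀ a b, f (a ∖ b) = f a ∖ f b
  map_zero : f zero = zero

section Hom

variable {S T U : Type*} [SBA S] [SBA T] [SBA U]

/-- `x ∖ y` is the orthogonal complement of `x ⋏ y ⋏ x` below `x`, so it need not be checked. -/
theorem IsSBAHom.of_map_wedge_vee {f : S → T} (hw : ∀ a b, f (a ⋏ b) = f a ⋏ f b)
    (hv : ∀ a b, f (a ⋎ b) = f a ⋎ f b) (h0 : f zero = zero) : IsSBAHom f where
  map_wedge := hw
  map_vee := hv
  map_diff a b := by
    refine (diff_eq_of_orthogonal ?_ ⟨?_, ?_⟩).symm <;> simp only [← hw, ← hv]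
    · rw [diff_ax1]
    · rw [diff_ax2, h0]
    · rw [diff_ax3, h0]
  map_zero := h0

theorem IsSBAHom.id : IsSBAHom (id : S → S) :=
  ⟨fun _ _ => rfl, fun _ _ => rfl, fun _ _ => rfl, rfl⟩

theorem IsSBAHom.comp {g : T → U} {f : S → T} (hg : IsSBAHom g) (hf : IsSBAHom f) :
    IsSBAHom (g ∘ f) where
  map_wedge a b := by simp only [Function.comp, hf.map_wedge, hg.map_wedge]
  map_vee a b := by simp only [Function.comp, hf.map_vee, hg.map_vee]
  map_diff a b := by simp only [Function.comp, hf.map_diff, hg.map_diff]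
  map_zero := by simp only [Function.comp, hf.map_zero, hg.map_zero]

theorem IsHom.isSBAHom {S T : Type u} [SBA S] [SBA T] {f : S → T} (hf : IsHom f) :
    IsSBAHom f :=
  ⟨hf.1, hf.2.1, hf.2.2.1, hf.2.2.2⟩

theorem Generates.eq_of_isSBAHom {X : Set S} (hX : Generates X) {f g : S → T}
    (hf : IsSBAHom f) (hg : IsSBAHom g) (h : ∀ x ∈ X, f x = g x) : f = g := by
  have hall := hX {s | f s = g s} h (hf.map_zero.trans hg.map_zero.symm)
    fun a b (ha : f a = g a) (hb : f b = g b) =>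
      ⟨show f (a ⋏ b) = g (a ⋏ b) by rw [hf.map_wedge, hg.map_wedge, ha, hb],
        show f (a ⋎ b) = g (a ⋎ b) by rw [hf.map_vee, hg.map_vee, ha, hb],
        show f (a ∖ b) = g (a ∖ b) by rw [hf.map_diff, hg.map_diff, ha, hb]⟩
  funext s
  exact (Set.eq_univ_iff_forall.1 hall s : _)

end Hom

section Lists

variable {S T : Type*} [SBA S] [SBA T]

def joinList : List S → S
  | [] => zero
  | a :: l => a ⋎ joinList l

/-- The meet of a list; the empty meet is `zero`, as `S` need not have a top element. -/
def meetList : List S → S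
  | [] => zero
  | [a] => a
  | a :: b :: l => a ⋏ meetList (b :: l)

theorem joinList_eq_zero {L : List S} (h : ∀ t ∈ L, t = zero) : joinList L = zero := by
  induction L with
  | nil => rfl
  | cons a L ih =>
    rw [joinList, h a List.mem_cons_self, ih fun t ht => h t (List.mem_cons_of_mem a ht),
      zero_vee]

theorem joinList_map_eq_of_eq_zero {β : Type*} {L : List β} (hL : L.Nodup) {b : β} (hb : b ∈ L)
    (f : β → S) (h : ∀ a ∈ L, a ≠ b → f a = zero) : joinList (L.map f) = f b := by
  induction L with
  | nil => cases hb
  | cons a L ih =>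
    obtain ⟨haL, hL⟩ := List.nodup_cons.1 hL
    rw [List.map_cons, joinList]
    rcases List.mem_cons.1 hb with rfl | hb
    · rw [joinList_eq_zero, vee_zero]
      simp only [List.mem_map]
      rintro _ ⟨c, hc, rfl⟩
      exact h c (List.mem_cons_of_mem _ hc) fun hcb => haL (hcb ▸ hc)
    · rw [h a List.mem_cons_self fun hab => haL (hab ▸ hb), zero_vee]
      exact ih hL hb fun c hc => h c (List.mem_cons_of_mem _ hc)

theorem Orthogonal.joinList_right {s : S} {L : List S} (h : ∀ t ∈ L, Orthogonal s t) :
    Orthogonal s (joinList L) := by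
  induction L with
  | nil => exact ⟨wedge_zero s, zero_wedge s⟩
  | cons a L ih =>
    exact (h a List.mem_cons_self).vee_right (ih fun t ht => h t (List.mem_cons_of_mem a ht))

theorem nle_joinList {s : S} {L : List S} (h : ∀ t ∈ L, nle t s) : nle (joinList L) s := by
  induction L with
  | nil => exact ⟨zero_wedge s, wedge_zero s⟩
  | cons a L ih =>
    obtain ⟨h₁, h₂⟩ := ih fun t ht => h t (List.mem_cons_of_mem a ht)
    obtain ⟨ha₁, ha₂⟩ := h a List.mem_cons_self
    exact ⟨by rw [joinList, sdistrib2, ha₁, h₁], by rw [joinList, sdistrib1, ha₂, h₂]⟩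

theorem dle_joinList {z t : S} {L : List S} (ht : t ∈ L) (hz : dle z t) :
    dle z (joinList L) := by
  induction L with
  | nil => cases ht
  | cons a L ih =>
    rw [dle, joinList, sdistrib1, sdistrib2]
    rcases List.mem_cons.1 ht with rfl | ht
    · rw [hz, wedge_assoc z]
      exact absorb3 _ _
    · rw [ih ht]
      exact absorb4 _ _

theorem joinList_map_wedge_joinList_map {β : Type*} {L : List β} (hL : L.Nodup) (f g : β → S)
    (h : ∀ i ∈ L, ∀ j ∈ L, i ≠ j → Orthogonal (f i) (g j)) :
    joinList (L.map f) ⋏ joinList (L.map g) = joinList (L.map fun i => f i ⋏ g i) := by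
  induction L with
  | nil => exact zero_wedge _
  | cons a L ih =>
    obtain ⟨haL, hL⟩ := List.nodup_cons.1 hL
    have hf : Orthogonal (f a) (joinList (L.map g)) := Orthogonal.joinList_right <| by
      simp only [List.mem_map]
      rintro _ ⟨j, hj, rfl⟩
      exact h a List.mem_cons_self j (List.mem_cons_of_mem a hj) fun haj => haL (haj ▸ hj)
    have hg : Orthogonal (g a) (joinList (L.map f)) := Orthogonal.joinList_right <| by
      simp only [List.mem_map]
      rintro _ ⟨j, hj, rfl⟩
      exact (h j (List.mem_cons_of_mem a hj) a List.mem_cons_self fun hja => haL (hja ▸ hj)).symm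
    simp only [List.map_cons, joinList]
    rw [sdistrib2, sdistrib1, sdistrib1, hf.1, hg.2, vee_zero, zero_vee,
      ih hL fun i hi j hj => h i (List.mem_cons_of_mem a hi) j (List.mem_cons_of_mem a hj)]

theorem joinList_map_vee_joinList_map {β : Type*} {L : List β} (hL : L.Nodup) (f g : β → S)
    (h : ∀ i ∈ L, ∀ j ∈ L, i ≠ j → Orthogonal (f i) (g j)) :
    joinList (L.map f) ⋎ joinList (L.map g) = joinList (L.map fun i => f i ⋎ g i) := by
  induction L with
  | nil => exact zero_vee _
  | cons a L ih =>
    obtain ⟨haL, hL⟩ := List.nodup_cons.1 hL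
    have hg : Orthogonal (g a) (joinList (L.map f)) := Orthogonal.joinList_right <| by
      simp only [List.mem_map]
      rintro _ ⟨j, hj, rfl⟩
      exact (h j (List.mem_cons_of_mem a hj) a List.mem_cons_self fun hja => haL (hja ▸ hj)).symm
    simp only [List.map_cons, joinList]
    rw [vee_assoc, ← vee_assoc (joinList _), ← hg.vee_comm, vee_assoc, ← vee_assoc,
      ih hL fun i hi j hj => h i (List.mem_cons_of_mem a hi) j (List.mem_cons_of_mem a hj)]

theorem dle_meetList_of_mem {t : S} {L : List S} (ht : t ∈ L) : dle (meetList L) t := by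
  induction L with
  | nil => cases ht
  | cons a L ih =>
    match L, ht, ih with
    | [], ht, _ =>
      rw [List.mem_singleton.1 ht]
      exact dle_refl a
    | b :: L, ht, ih =>
      rcases List.mem_cons.1 ht with rfl | ht
      · exact dle_wedge_left _ _
      · exact dle_trans (dle_wedge_right _ _) (ih ht)

theorem dle_meetList {s : S} {L : List S} (hL : L ≠ []) (h : ∀ t ∈ L, dle s t) :
    dle s (meetList L) := by
  induction L with
  | nil => exact absurd rfl hL
  | cons a L ih =>
    match L, h, ih with
    | [], h, _ => exact h a List.mem_cons_self
    | b :: L, h, ih =>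
      exact dle_wedge (h a List.mem_cons_self)
        (ih (List.cons_ne_nil _ _) fun t ht => h t (List.mem_cons_of_mem a ht))

theorem IsSBAHom.map_joinList {f : S → T} (hf : IsSBAHom f) (L : List S) :
    f (joinList L) = joinList (L.map f) := by
  induction L with
  | nil => exact hf.map_zero
  | cons a L ih => rw [joinList, hf.map_vee, ih, List.map_cons, joinList]

theorem IsSBAHom.map_meetList {f : S → T} (hf : IsSBAHom f) (L : List S) :
    f (meetList L) = meetList (L.map f) := by
  induction L with
  | nil => exact hf.map_zero
  | cons a L ih =>
    match L, ih with
    | [], _ => rfl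
    | b :: L, ih => rw [meetList, hf.map_wedge, ih]; rfl

end Lists

section Atoms

variable {S : Type*} [SBA S] {ι : Type*} [Fintype ι] [DecidableEq ι] (y : ι → S)

noncomputable def atom (A : Finset ι) : S :=
  meetList (A.toList.map y) ∖ joinList (Aᶜ.toList.map y)

noncomputable def cell (A : Finset ι) (a b : ι) : S := y a ⋏ atom y A ⋏ y b

variable {y}

theorem atom_dle {A : Finset ι} {a : ι} (ha : a ∈ A) : dle (atom y A) (y a) :=
  (nle_diff _ _).dle_trans <|
    dle_meetList_of_mem (List.mem_map.2 ⟨a, Finset.mem_toList.2 ha, rfl⟩)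

theorem atom_orthogonal {A : Finset ι} {b : ι} (hb : b ∉ A) : Orthogonal (atom y A) (y b) :=
  (Orthogonal.of_dle_left (dle_joinList
    (List.mem_map.2 ⟨b, Finset.mem_toList.2 (Finset.mem_compl.2 hb), rfl⟩) (dle_refl _))
    (orthogonal_diff _ _).symm).symm

theorem atom_orthogonal_atom {A B : Finset ι} (hAB : A ≠ B) :
    Orthogonal (atom y A) (atom y B) := by
  wlog h : ¬A ⊆ B generalizing A B
  · exact (this hAB.symm fun hBA => hAB (Finset.Subset.antisymm (not_not.1 h) hBA)).symm
  obtain ⟨j, hjA, hjB⟩ := Finset.not_subset.1 h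
  exact Orthogonal.of_dle_left (atom_dle hjA) (atom_orthogonal hjB).symm

theorem dle_atom {s : S} {A : Finset ι} (hA : A.Nonempty) (hdle : ∀ a ∈ A, dle s (y a))
    (horth : ∀ b ∉ A, Orthogonal s (y b)) : dle s (atom y A) := by
  refine dle_diff (dle_meetList ?_ ?_) (Orthogonal.joinList_right ?_)
  · simpa only [ne_eq, List.map_eq_nil_iff, Finset.toList_eq_nil] using hA.ne_empty
  · simp only [List.mem_map, Finset.mem_toList]
    rintro _ ⟨a, ha, rfl⟩
    exact hdle a ha
  · simp only [List.mem_map, Finset.mem_toList, Finset.mem_compl]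
    rintro _ ⟨b, hb, rfl⟩
    exact horth b hb

theorem cell_wedge_cell {A : Finset ι} {b c : ι} (hb : b ∈ A) (hc : c ∈ A) (a d : ι) :
    cell y A a b ⋏ cell y A c d = cell y A a d :=
  calc cell y A a b ⋏ cell y A c d = y a ⋏ (atom y A ⋏ (y b ⋏ y c) ⋏ atom y A) ⋏ y d := by
        simp only [cell, wedge_assoc]
    _ = cell y A a d := by rw [dle_wedge (atom_dle hb) (atom_dle hc), cell]

theorem cell_vee_cell {A : Finset ι} {a b c d : ι} (ha : a ∈ A) (hb : b ∈ A) (hc : c ∈ A)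
    (hd : d ∈ A) : cell y A a b ⋎ cell y A c d = cell y A c b := by
  rw [vee_eq_wedge_of_drel ⟨?_, ?_⟩, cell_wedge_cell hd ha]
  · rw [cell_wedge_cell hb hc, cell_wedge_cell hd ha]
  · rw [cell_wedge_cell hd ha, cell_wedge_cell hb hc]

theorem cell_orthogonal_cell {A B : Finset ι} (hAB : A ≠ B) (a b c d : ι) :
    Orthogonal (cell y A a b) (cell y B c d) := by
  have key : ∀ {A B : Finset ι}, A ≠ B → ∀ a b c d, cell y A a b ⋏ cell y B c d = zero := by
    intro A B hAB a b c d
    calc cell y A a b ⋏ cell y B c d = y a ⋏ (atom y A ⋏ (y b ⋏ y c) ⋏ atom y B) ⋏ y d := by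
          simp only [cell, wedge_assoc]
      _ = zero := by
          rw [wedge_wedge_eq_zero (atom_orthogonal_atom hAB).2, wedge_zero, zero_wedge]
  exact ⟨key hAB a b c d, key hAB.symm c d a b⟩

end Atoms

section Decomposition

variable {S : Type*} [SBA S] {ι : Type*} [Fintype ι] [DecidableEq ι] {y : ι → S}

/-- Splitting `s` as `(s ⋏ y j ⋏ s) ⋎ (s ∖ y j)` for each `j ∈ U` cuts it into pieces lying
below single atoms. -/
theorem wedge_eq_zero_of_orthogonal_atoms {i : ι} {r : S}
    (hr : ∀ A : Finset ι, i ∈ A → Orthogonal r (atom y A)) (U : Finset ι) :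
    ∀ s, dle s (y i) → (∀ j ∉ U, dle s (y j) ∨ Orthogonal s (y j)) → r ⋏ s = zero := by
  classical
  induction U using Finset.induction_on with
  | empty =>
    intro s hsi hs
    set A := Finset.univ.filter fun j => dle s (y j)
    have hiA : i ∈ A := Finset.mem_filter.2 ⟨Finset.mem_univ i, hsi⟩
    have hsA : dle s (atom y A) := dle_atom ⟨i, hiA⟩ (fun a ha => (Finset.mem_filter.1 ha).2)
      fun b hb => (hs b (Finset.notMem_empty b)).resolve_left fun h =>
        hb (Finset.mem_filter.2 ⟨Finset.mem_univ b, h⟩)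
    exact (Orthogonal.of_dle_left hsA (hr A hiA).symm).2
  | insert j U _ ih =>
    intro s hsi hs
    have inherit : ∀ p, nle p s → dle p (y i) ∧ ∀ k ∉ U, k ≠ j →
        dle p (y k) ∨ Orthogonal p (y k) := fun p hp =>
      ⟨hp.dle_trans hsi, fun k hkU hkj =>
        (hs k (by simp [hkU, hkj])).imp hp.dle_trans (Orthogonal.of_dle_left hp.dle)⟩
    obtain ⟨h₁i, h₁⟩ := inherit _ (nle_sandwich s (y j))
    obtain ⟨h₂i, h₂⟩ := inherit _ (nle_diff s (y j))
    rw [← diff_ax1 s (y j), sdistrib1, ih _ h₁i fun k hk => ?_, ih _ h₂i fun k hk => ?_, zero_vee]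
    · by_cases hkj : k = j
      · exact .inr (hkj ▸ orthogonal_diff s (y j))
      · exact h₂ k hk hkj
    · by_cases hkj : k = j
      · exact .inl (hkj ▸ dle_trans (dle_wedge_left _ _) (dle_wedge_right _ _))
      · exact h₁ k hk hkj

theorem joinList_cell_self (i : ι) :
    joinList ((Finset.univ : Finset (Finset ι)).toList.map
      fun A => if i ∈ A then cell y A i i else zero) = y i := by
  set f : Finset ι → S := fun A => if i ∈ A then cell y A i i else zero
  set E := joinList ((Finset.univ : Finset (Finset ι)).toList.map f)
  have hE : nle E (y i) := nle_joinList <| by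
    simp only [List.mem_map]
    rintro _ ⟨A, -, rfl⟩
    by_cases hiA : i ∈ A
    · simpa only [f, if_pos hiA, cell] using nle_sandwich (y i) (atom y A)
    · simp only [f, if_neg hiA]
      exact ⟨zero_wedge _, wedge_zero _⟩
  have hatom : ∀ A : Finset ι, i ∈ A → Orthogonal (y i ∖ E) (atom y A) := by
    intro A hiA
    have hAE : dle (atom y A) E :=
      dle_joinList (List.mem_map_of_mem (f := f) (Finset.mem_toList.2 (Finset.mem_univ A)))
        (by simpa only [f, if_pos hiA, cell] using dle_sandwich (atom_dle hiA))
    exact (Orthogonal.of_dle_left hAE (orthogonal_diff (y i) E).symm).symm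
  have hzero : y i ∖ E = zero :=
    calc y i ∖ E = (y i ∖ E) ⋏ y i := (nle_diff _ _).1.symm
      _ = zero := wedge_eq_zero_of_orthogonal_atoms hatom Finset.univ (y i) (dle_refl _)
          fun j hj => absurd (Finset.mem_univ j) hj
  exact eq_of_nle_of_dle hE (diff_eq_zero_iff.1 hzero)

end Decomposition

/-- The primitive skew Boolean algebra on `α`: the rectangular band `α × α`, in which
`(a, b) ⋏ (c, d) = (a, d)`, with a zero adjoined. -/
abbrev Primitive (α : Type*) : Type _ := Option (α × α)

namespace Primitive

variable {α : Type*}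

instance : SBA (Primitive α) where
  wedge
    | some p, some q => some (p.1, q.2)
    | _, _ => none
  vee
    | none, y => y
    | some p, none => some p
    | some p, some q => some (q.1, p.2)
  diff
    | x, none => x
    | _, some _ => none
  zero := none
  wedge_assoc := by rintro (_ | _) (_ | _) (_ | _) <;> rfl
  vee_assoc := by rintro (_ | _) (_ | _) (_ | _) <;> rfl
  absorb1 := by rintro (_ | _) (_ | _) <;> rfl
  absorb2 := by rintro (_ | _) (_ | _) <;> rfl
  absorb3 := by rintro (_ | _) (_ | _) <;> rfl
  absorb4 := by rintro (_ | _) (_ | _) <;> rfl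
  sdistrib1 := by rintro (_ | _) (_ | _) (_ | _) <;> rfl
  sdistrib2 := by rintro (_ | _) (_ | _) (_ | _) <;> rfl
  zero_wedge := by rintro (_ | _) <;> rfl
  wedge_zero := by rintro (_ | _) <;> rfl
  zero_vee := by rintro (_ | _) <;> rfl
  vee_zero := by rintro (_ | _) <;> rfl
  diff_ax1 := by rintro (_ | _) (_ | _) <;> rfl
  diff_ax2 := by rintro (_ | _) (_ | _) <;> rfl
  diff_ax3 := by rintro (_ | _) (_ | _) <;> rfl

theorem nat_card [Finite α] : Nat.card (Primitive α) = Nat.card α ^ 2 + 1 := by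
  rw [Finite.card_option, Nat.card_prod, sq]

theorem meetList_eq_zero {L : List (Primitive α)} (h : zero ∈ L) : meetList L = zero := by
  induction L with
  | nil => cases h
  | cons a L ih =>
    match L, h, ih with
    | [], h, _ => exact List.mem_singleton.1 h ▸ rfl
    | b :: L, h, ih =>
      rcases List.mem_cons.1 h with rfl | h
      · exact zero_wedge _
      · rw [meetList, ih h, wedge_zero]

theorem meetList_ne_zero {L : List (Primitive α)} (hL : L ≠ []) (h : ∀ t ∈ L, t ≠ zero) :
    meetList L ≠ zero := by
  induction L with
  | nil => exact absurd rfl hL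
  | cons a L ih =>
    match L, h, ih with
    | [], h, _ => exact h a List.mem_cons_self
    | b :: L, h, ih =>
      obtain ⟨p, hp⟩ := Option.ne_none_iff_exists'.1 (h a List.mem_cons_self)
      obtain ⟨q, hq⟩ := Option.ne_none_iff_exists'.1
        (ih (List.cons_ne_nil _ _) fun t ht => h t (List.mem_cons_of_mem a ht))
      rw [meetList, hp, hq]
      exact Option.some_ne_none _

theorem joinList_ne_zero {L : List (Primitive α)} {t : Primitive α} (ht : t ∈ L)
    (h : t ≠ zero) : joinList L ≠ zero := by
  induction L with
  | nil => cases ht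
  | cons a L ih =>
    rw [joinList]
    rcases List.mem_cons.1 ht with rfl | ht
    · obtain ⟨p, rfl⟩ := Option.ne_none_iff_exists'.1 h
      rcases joinList L with _ | _ <;> exact Option.some_ne_none _
    · obtain ⟨p, hp⟩ := Option.ne_none_iff_exists'.1 (ih ht)
      rw [hp]
      rcases a with _ | _ <;> exact Option.some_ne_none _

theorem diff_eq_zero_of_ne_zero (x : Primitive α) {y : Primitive α} (hy : y ≠ zero) :
    x ∖ y = zero := by
  obtain ⟨p, rfl⟩ := Option.ne_none_iff_exists'.1 hy
  rfl

end Primitive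

instance instPi {β : Type*} {π : β → Type*} [∀ b, SBA (π b)] : SBA (∀ b, π b) where
  wedge f g b := f b ⋏ g b
  vee f g b := f b ⋎ g b
  diff f g b := f b ∖ g b
  zero _ := zero
  wedge_assoc _ _ _ := funext fun _ => wedge_assoc _ _ _
  vee_assoc _ _ _ := funext fun _ => vee_assoc _ _ _
  absorb1 _ _ := funext fun _ => absorb1 _ _
  absorb2 _ _ := funext fun _ => absorb2 _ _
  absorb3 _ _ := funext fun _ => absorb3 _ _
  absorb4 _ _ := funext fun _ => absorb4 _ _
  sdistrib1 _ _ _ := funext fun _ => sdistrib1 _ _ _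
  sdistrib2 _ _ _ := funext fun _ => sdistrib2 _ _ _
  zero_wedge _ := funext fun _ => zero_wedge _
  wedge_zero _ := funext fun _ => wedge_zero _
  zero_vee _ := funext fun _ => zero_vee _
  vee_zero _ := funext fun _ => vee_zero _
  diff_ax1 _ _ := funext fun _ => diff_ax1 _ _
  diff_ax2 _ _ := funext fun _ => diff_ax2 _ _
  diff_ax3 _ _ := funext fun _ => diff_ax3 _ _

theorem isSBAHom_eval {β : Type*} {π : β → Type*} [∀ b, SBA (π b)] (b : β) :
    IsSBAHom fun f : ∀ b, π b => f b :=
  ⟨fun _ _ => rfl, fun _ _ => rfl, fun _ _ => rfl, rfl⟩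

instance instULift {T : Type*} [SBA T] : SBA (ULift T) where
  wedge a b := ⟨a.down ⋏ b.down⟩
  vee a b := ⟨a.down ⋎ b.down⟩
  diff a b := ⟨a.down ∖ b.down⟩
  zero := ⟨zero⟩
  wedge_assoc _ _ _ := congrArg ULift.up (wedge_assoc _ _ _)
  vee_assoc _ _ _ := congrArg ULift.up (vee_assoc _ _ _)
  absorb1 _ _ := congrArg ULift.up (absorb1 _ _)
  absorb2 _ _ := congrArg ULift.up (absorb2 _ _)
  absorb3 _ _ := congrArg ULift.up (absorb3 _ _)
  absorb4 _ _ := congrArg ULift.up (absorb4 _ _)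
  sdistrib1 _ _ _ := congrArg ULift.up (sdistrib1 _ _ _)
  sdistrib2 _ _ _ := congrArg ULift.up (sdistrib2 _ _ _)
  zero_wedge _ := congrArg ULift.up (zero_wedge _)
  wedge_zero _ := congrArg ULift.up (wedge_zero _)
  zero_vee _ := congrArg ULift.up (zero_vee _)
  vee_zero _ := congrArg ULift.up (vee_zero _)
  diff_ax1 _ _ := congrArg ULift.up (diff_ax1 _ _)
  diff_ax2 _ _ := congrArg ULift.up (diff_ax2 _ _)
  diff_ax3 _ _ := congrArg ULift.up (diff_ax3 _ _)

theorem isSBAHom_down {T : Type*} [SBA T] : IsSBAHom (ULift.down : ULift T → T) :=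
  ⟨fun _ _ => rfl, fun _ _ => rfl, fun _ _ => rfl, rfl⟩

/-- The model of the free algebra on `ι`: one primitive factor for each subset `A` of `ι`
(the factor of `∅` is trivial). -/
abbrev Model (ι : Type*) : Type _ := ∀ A : Finset ι, Primitive A

namespace Model

variable {ι : Type*} [DecidableEq ι]

def gen (i : ι) : Model ι := fun A => if h : i ∈ A then some (⟨i, h⟩, ⟨i, h⟩) else none

theorem gen_apply_ne_zero {i : ι} {B : Finset ι} (h : i ∈ B) : gen i B ≠ zero := by
  unfold gen
  rw [dif_pos h]
  exact Option.some_ne_none _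

theorem gen_apply_eq_zero {i : ι} {B : Finset ι} (h : i ∉ B) : gen i B = zero :=
  dif_neg h

variable [Fintype ι] {S T : Type*} [SBA S] [SBA T]

noncomputable def cellOf (y : ι → S) (A : Finset ι) : Primitive A → S
  | none => zero
  | some (a, b) => cell y A a b

noncomputable def lift (y : ι → S) (m : Model ι) : S :=
  joinList ((Finset.univ : Finset (Finset ι)).toList.map fun A => cellOf y A (m A))

variable {y : ι → S}

theorem cellOf_wedge (A : Finset ι) (p q : Primitive A) :
    cellOf y A p ⋏ cellOf y A q = cellOf y A (p ⋏ q) := by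
  rcases p with _ | ⟨a, b⟩
  · exact zero_wedge _
  rcases q with _ | ⟨c, d⟩
  · exact wedge_zero _
  exact cell_wedge_cell b.2 c.2 _ _

theorem cellOf_vee (A : Finset ι) (p q : Primitive A) :
    cellOf y A p ⋎ cellOf y A q = cellOf y A (p ⋎ q) := by
  rcases p with _ | ⟨a, b⟩
  · exact zero_vee _
  rcases q with _ | ⟨c, d⟩
  · exact vee_zero _
  exact cell_vee_cell a.2 b.2 c.2 d.2

theorem cellOf_orthogonal {A B : Finset ι} (hAB : A ≠ B) (p : Primitive A) (q : Primitive B) :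
    Orthogonal (cellOf y A p) (cellOf y B q) := by
  rcases p with _ | ⟨a, b⟩
  · exact ⟨zero_wedge _, wedge_zero _⟩
  rcases q with _ | ⟨c, d⟩
  · exact ⟨wedge_zero _, zero_wedge _⟩
  exact cell_orthogonal_cell hAB _ _ _ _

theorem isSBAHom_lift (y : ι → S) : IsSBAHom (lift y) := by
  have hL := Finset.nodup_toList (Finset.univ : Finset (Finset ι))
  refine .of_map_wedge_vee (fun m m' => ?_) (fun m m' => ?_) ?_
  · rw [lift, lift, lift, joinList_map_wedge_joinList_map hL _ _
      fun A _ B _ hAB => cellOf_orthogonal hAB (m A) (m' B)]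
    simp only [cellOf_wedge]
    rfl
  · rw [lift, lift, lift, joinList_map_vee_joinList_map hL _ _
      fun A _ B _ hAB => cellOf_orthogonal hAB (m A) (m' B)]
    simp only [cellOf_vee]
    rfl
  · exact joinList_eq_zero fun t ht => by
      obtain ⟨A, -, rfl⟩ := List.mem_map.1 ht
      rfl

theorem lift_gen (i : ι) : lift y (gen i) = y i := by
  rw [← joinList_cell_self (y := y) i, lift]
  congr 1
  refine List.map_congr_left fun A _ => ?_
  by_cases hiA : i ∈ A <;> simp [gen, cellOf, hiA]

theorem _root_.SBA.IsSBAHom.map_lift {f : S → T} (hf : IsSBAHom f) (m : Model ι) :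
    f (lift y m) = lift (f ∘ y) m := by
  have hatom (A : Finset ι) : f (atom y A) = atom (f ∘ y) A := by
    rw [atom, atom, hf.map_diff, hf.map_meetList, hf.map_joinList, List.map_map, List.map_map]
  have hcell (A : Finset ι) (p : Primitive A) : f (cellOf y A p) = cellOf (f ∘ y) A p := by
    rcases p with _ | ⟨a, b⟩
    · exact hf.map_zero
    · simp only [cellOf, cell, hf.map_wedge, hatom, Function.comp]
  rw [lift, hf.map_joinList, List.map_map]
  simp only [Function.comp_def, hcell]
  rfl

theorem atom_gen_apply_of_ne {A B : Finset ι} (hAB : A ≠ B) :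
    atom (fun i => gen i B) A = zero := by
  by_cases hAB' : A ⊆ B
  · obtain ⟨j, hjB, hjA⟩ := Finset.not_subset.1 fun hBA => hAB (Finset.Subset.antisymm hAB' hBA)
    refine Primitive.diff_eq_zero_of_ne_zero _
      (Primitive.joinList_ne_zero ?_ (gen_apply_ne_zero hjB))
    exact List.mem_map_of_mem (Finset.mem_toList.2 (Finset.mem_compl.2 hjA))
  · obtain ⟨j, hjA, hjB⟩ := Finset.not_subset.1 hAB'
    rw [atom, Primitive.meetList_eq_zero, zero_diff]
    exact gen_apply_eq_zero hjB ▸ List.mem_map_of_mem (Finset.mem_toList.2 hjA)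

theorem atom_gen_apply_self_ne_zero {B : Finset ι} (hB : B.Nonempty) :
    atom (fun i => gen i B) B ≠ zero := by
  rw [atom, joinList_eq_zero, diff_zero]
  · refine Primitive.meetList_ne_zero ?_ ?_
    · simpa only [ne_eq, List.map_eq_nil_iff, Finset.toList_eq_nil] using hB.ne_empty
    · simp only [List.mem_map, Finset.mem_toList]
      rintro _ ⟨a, ha, rfl⟩
      exact gen_apply_ne_zero ha
  · simp only [List.mem_map, Finset.mem_toList, Finset.mem_compl]
    rintro _ ⟨b, hb, rfl⟩
    exact gen_apply_eq_zero hb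

theorem lift_gen_eq_self (m : Model ι) : lift gen m = m := by
  funext B
  rw [(isSBAHom_eval B).map_lift, lift, joinList_map_eq_of_eq_zero
    (Finset.nodup_toList _) (Finset.mem_toList.2 (Finset.mem_univ B))]
  · rcases hm : m B with _ | ⟨a, b⟩
    · rfl
    obtain ⟨q, hq⟩ := Option.ne_none_iff_exists'.1 (atom_gen_apply_self_ne_zero ⟨_, a.2⟩)
    show gen (↑a) B ⋏ atom (fun i => gen i B) B ⋏ gen (↑b) B = some (a, b)
    rw [hq]
    simp only [gen, dif_pos a.2, dif_pos b.2]
    rfl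
  · intro A _ hAB
    rcases m A with _ | ⟨a, b⟩
    · rfl
    show gen (↑a) B ⋏ atom (fun i => gen i B) A ⋏ gen (↑b) B = zero
    rw [atom_gen_apply_of_ne hAB, wedge_zero, zero_wedge]

end Model

theorem Model.nat_card (ι : Type*) [Fintype ι] :
    Nat.card (Model ι) = ∏ A : Finset ι, (A.card ^ 2 + 1) := by
  rw [Nat.card_pi]
  refine Finset.prod_congr rfl fun A _ => ?_
  rw [Primitive.nat_card, Nat.card_eq_fintype_card, Fintype.card_coe]

theorem prod_card_sq_add_one (ι : Type*) [Fintype ι] :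
    ∏ A : Finset ι, (A.card ^ 2 + 1) =
      ∏ m ∈ Finset.Icc 1 (Fintype.card ι), (m ^ 2 + 1) ^ (Fintype.card ι).choose m := by
  rw [← Finset.powerset_univ, Finset.prod_powerset, Finset.card_univ]
  have hj (j : ℕ) : ∏ t ∈ Finset.powersetCard j (Finset.univ : Finset ι), (t.card ^ 2 + 1)
      = (j ^ 2 + 1) ^ (Fintype.card ι).choose j := by
    rw [Finset.prod_congr rfl fun t ht => by rw [(Finset.mem_powersetCard.1 ht).2],
      Finset.prod_const, Finset.card_powersetCard, Finset.card_univ]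
  simp only [hj]
  rw [Finset.prod_range_succ', Finset.range_eq_Ico,
    Finset.prod_Ico_add' (fun m => (m ^ 2 + 1) ^ (Fintype.card ι).choose m),
    Finset.Ico_add_one_right_eq_Icc]
  simp

theorem nonempty_equiv_model {S : Type u} [SBA S] {ι : Type} [Fintype ι] [DecidableEq ι]
    {x : ι → S} (hx : Function.Injective x) (hfree : FreelyGenerates S (Set.range x)) :
    Nonempty (S ≃ Model ι) := by
  obtain ⟨hgen, hext⟩ := hfree
  obtain ⟨φ, hφ, hφx⟩ := hext (ULift.{u} (Model ι))
    fun z => ULift.up (Model.gen ((Equiv.ofInjective x hx).symm z))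
  set ψ : S → Model ι := ULift.down ∘ φ
  have hψ : IsSBAHom ψ := isSBAHom_down.comp hφ.isSBAHom
  have hψx : ψ ∘ x = Model.gen := funext fun i => by
    have h := hφx ⟨x i, i, rfl⟩
    rw [Equiv.ofInjective_symm_apply] at h
    exact congrArg ULift.down h
  refine ⟨⟨ψ, Model.lift x, fun s => ?_, fun m => ?_⟩⟩
  · refine congrFun (hgen.eq_of_isSBAHom ((Model.isSBAHom_lift x).comp hψ) .id ?_) s
    rintro _ ⟨i, rfl⟩
    exact (congrArg (Model.lift x) (congrFun hψx i)).trans (Model.lift_gen i)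
  · rw [hψ.map_lift, hψx, Model.lift_gen_eq_self]

end SBA

theorem stmt7_general (n : ℕ) (S : Type u) [SBA S]
    (x : Fin n → S) (hinj : Function.Injective x)
    (hfree : FreelyGenerates S (Set.range x)) :
    Finite S ∧ Nat.card S = ∏ m ∈ Finset.Icc 1 n, (m ^ 2 + 1) ^ n.choose m := by
  obtain ⟨e⟩ := nonempty_equiv_model hinj hfree
  refine ⟨.of_equiv _ e.symm, ?_⟩
  rw [Nat.card_congr e, Model.nat_card, prod_card_sq_add_one, Fintype.card_fin]

theorem stmt7 (n : ℕ) (hn : 1 ≤ n) (S : Type u) [SBA S]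
    (x : Fin n → S) (hinj : Function.Injective x)
    (hfree : FreelyGenerates S (Set.range x)) :
    Finite S ∧ Nat.card S = ∏ m ∈ Finset.Icc 1 n, (m ^ 2 + 1) ^ n.choose m :=
  stmt7_general n S x hinj hfree
end

section
/- Let α be a generalized Boolean algebra and let X ⊆ α be a finite subset with |X| = n such that the only subset of α containing X and ⊥ and closed under ⊔, ⊓ and \ is α itself. Then α has at most 2^n − 1 atoms. -/
universe u

section Aux

variable {α : Type u} [GeneralizedBooleanAlgebra α]

lemma aux_atom_inf (a x : α) (ha : IsAtom a) : a ⊓ x = ⊥ ∨ a ≤ x := by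
  rcases ha.le_iff.mp (inf_le_left : a ⊓ x ≤ a) with h | h
  · exact Or.inl h
  · exact Or.inr (inf_eq_left.mp h)

lemma aux_atom_le_sup {a u v : α} (ha : IsAtom a) : a ≤ u ⊔ v ↔ a ≤ u ∨ a ≤ v := by
  constructor
  · intro h
    have hsplit : a = (a ⊓ u) ⊔ (a ⊓ v) := by
      rw [← inf_sup_left, inf_eq_left.mpr h]
    rcases aux_atom_inf a u ha with h1 | h1
    · rcases aux_atom_inf a v ha with h2 | h2
      · exfalso; apply ha.1; rw [hsplit, h1, h2, bot_sup_eq]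
      · exact Or.inr h2
    · exact Or.inl h1
  · rintro (h | h)
    · exact h.trans le_sup_left
    · exact h.trans le_sup_right

lemma aux_atom_le_sdiff {a u v : α} (ha : IsAtom a) : a ≤ u \ v ↔ a ≤ u ∧ ¬ a ≤ v := by
  constructor
  · intro h
    have hd : Disjoint a v := disjoint_sdiff_self_left.mono_left h
    exact ⟨h.trans sdiff_le, fun hv => ha.1 (le_bot_iff.mp ((le_inf le_rfl hv).trans hd.le_bot))⟩
  · rintro ⟨hu, hv⟩
    rcases aux_atom_inf a v ha with h1 | h1
    · have : a \ v = a := sdiff_eq_self_iff_disjoint.mpr (disjoint_iff.mpr (by rwa [inf_comm]))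
      calc a = a \ v := this.symm
        _ ≤ u \ v := sdiff_le_sdiff_right hu
    · exact absurd h1 hv

end Aux

theorem stmt10 (α : Type u) [GeneralizedBooleanAlgebra α] (n : ℕ) (X : Set α)
    (hX : X.Finite) (hcard : X.ncard = n)
    (hgen : ∀ T : Set α, X ⊆ T → ⊥ ∈ T →
      (∀ a b : α, a ∈ T → b ∈ T → a ⊔ b ∈ T ∧ a ⊓ b ∈ T ∧ a \ b ∈ T) →
      T = Set.univ) :
    {a : α | IsAtom a}.Finite ∧ {a : α | IsAtom a}.ncard ≤ 2 ^ n - 1 := by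
  classical
  set s : Finset α := hX.toFinset with hs
  have hsmem : ∀ x : α, x ∈ s ↔ x ∈ X := fun x => hX.mem_toFinset
  have hscard : s.card = n := by
    rw [← hcard, Set.ncard_eq_toFinset_card X hX]
  set f : α → Finset α := fun a => s.filter (fun x => a ≤ x) with hf
  -- every atom lies below some generator
  have hne : ∀ a : α, IsAtom a → ∃ x ∈ X, a ≤ x := by
    intro a ha
    by_contra hcon
    push_neg at hcon
    have hT := hgen {t | a ⊓ t = ⊥}
      (fun x hx => by
        rcases aux_atom_inf a x ha with h | h
        · exact h
        · exact absurd h (hcon x hx))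
      (by simp)
      (by
        intro u v hu hv
        simp only [Set.mem_setOf_eq] at hu hv ⊢
        refine ⟨by rw [inf_sup_left, hu, hv, bot_sup_eq], ?_, ?_⟩
        · exact le_bot_iff.mp ((inf_le_inf_left a inf_le_left).trans hu.le)
        · exact le_bot_iff.mp ((inf_le_inf_left a sdiff_le).trans hu.le))
    have : a ⊓ a = ⊥ := by
      have := hT ▸ Set.mem_univ a
      simpa using (Set.eq_univ_iff_forall.mp hT a)
    exact ha.1 (by simpa using this)
  -- f maps atoms into nonempty subsets of s
  have hmem : ∀ a ∈ {a : α | IsAtom a}, f a ∈ s.powerset.erase ∅ := by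
    intro a ha
    rw [Finset.mem_erase, Finset.mem_powerset]
    refine ⟨?_, Finset.filter_subset _ _⟩
    obtain ⟨x, hxX, hax⟩ := hne a ha
    intro h
    have : x ∈ f a := Finset.mem_filter.mpr ⟨(hsmem x).mpr hxX, hax⟩
    rw [h] at this
    exact absurd this (Finset.notMem_empty x)
  -- f is injective on atoms
  have hinj : Set.InjOn f {a : α | IsAtom a} := by
    intro a ha b hb hab
    have hT := hgen {t | a ≤ t ↔ b ≤ t}
      (fun x hx => by
        constructor
        · intro h
          have : x ∈ f a := Finset.mem_filter.mpr ⟨(hsmem x).mpr hx, h⟩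
          rw [hab] at this
          exact (Finset.mem_filter.mp this).2
        · intro h
          have : x ∈ f b := Finset.mem_filter.mpr ⟨(hsmem x).mpr hx, h⟩
          rw [← hab] at this
          exact (Finset.mem_filter.mp this).2)
      (by simp [Set.mem_setOf_eq, le_bot_iff, ha.1, hb.1])
      (by
        intro u v hu hv
        simp only [Set.mem_setOf_eq] at hu hv ⊢
        refine ⟨?_, ?_, ?_⟩
        · rw [aux_atom_le_sup ha, aux_atom_le_sup hb, hu, hv]
        · rw [le_inf_iff, le_inf_iff, hu, hv]
        · rw [aux_atom_le_sdiff ha, aux_atom_le_sdiff hb, hu, hv])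
    have hab' : a ≤ b := by
      have := Set.eq_univ_iff_forall.mp hT b
      simp only [Set.mem_setOf_eq] at this
      exact this.mpr le_rfl
    rcases hb.le_iff.mp hab' with h | h
    · exact absurd h ha.1
    · exact h
  -- conclude
  have hfinpow : (↑(s.powerset.erase ∅) : Set (Finset α)).Finite := (s.powerset.erase ∅).finite_toSet
  have himg : f '' {a : α | IsAtom a} ⊆ ↑(s.powerset.erase ∅) := by
    rintro _ ⟨a, ha, rfl⟩
    exact hmem a ha
  have hfin : {a : α | IsAtom a}.Finite :=
    Set.Finite.of_finite_image (hfinpow.subset himg) hinj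
  refine ⟨hfin, ?_⟩
  calc {a : α | IsAtom a}.ncard = (f '' {a : α | IsAtom a}).ncard :=
        (Set.ncard_image_of_injOn hinj).symm
    _ ≤ (↑(s.powerset.erase ∅) : Set (Finset α)).ncard :=
        Set.ncard_le_ncard himg hfinpow
    _ = (s.powerset.erase ∅).card := by rw [Set.ncard_coe_finset]
    _ = 2 ^ n - 1 := by
        rw [Finset.card_erase_of_mem (Finset.empty_mem_powerset s), Finset.card_powerset, hscard]
end

section
/- Let n ≥ 1 and let B be a generalized Boolean algebra together with a set X ⊆ B of n distinct elements such that: the only subset of B containing X and ⊥ and closed under ⊔, ⊓, \ is B itself, and for every generalized Boolean algebra C, every map X → C extends to a map B → C preserving ⊔, ⊓, \ and ⊥. Then |B| = 2^{2^n − 1}, and B has exactly 2^n − 1 atoms. -/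
/-!
A generalized Boolean algebra `B` freely generated by `n` elements `x` is the finite power set
algebra on the `2 ^ n - 1` nonempty subsets `s` of the generators. Freeness gives a homomorphism
`f : B → Finset {s // s.Nonempty}` sending `x` to `{s | x ∈ s}`. Conversely the minterms
`⋂_{x ∈ s} x \ ⋃_{x ∉ s} x` are pairwise disjoint, so `S ↦ ⨆_{s ∈ S} minterm s` is a homomorphism
back. It sends `{s | x ∈ s}` to `x`, so composed with `f` it fixes the generators and is the
identity; in the other direction `f` sends each minterm to a singleton. Hence `B` is order
isomorphic to `Finset {s // s.Nonempty}`.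
-/

universe u

open Finset Function

section Hom

variable {B C D : Type*} [GeneralizedBooleanAlgebra B] [GeneralizedBooleanAlgebra C]
  [GeneralizedBooleanAlgebra D]

structure IsGeneralizedBooleanHom (f : B → C) : Prop where
  map_sup : ∀ a b, f (a ⊔ b) = f a ⊔ f b
  map_inf : ∀ a b, f (a ⊓ b) = f a ⊓ f b
  map_sdiff : ∀ a b, f (a \ b) = f a \ f b
  map_bot : f ⊥ = ⊥

def GeneratesGeneralizedBoolean (X : Set B) : Prop :=
  ∀ T : Set B, X ⊆ T → ⊥ ∈ T →
    (∀ a b : B, a ∈ T → b ∈ T → a ⊔ b ∈ T ∧ a ⊓ b ∈ T ∧ a \ b ∈ T) → T = Set.univ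

namespace IsGeneralizedBooleanHom

theorem id : IsGeneralizedBooleanHom (fun b : B => b) :=
  ⟨fun _ _ => rfl, fun _ _ => rfl, fun _ _ => rfl, rfl⟩

theorem comp {g : C → D} {f : B → C} (hg : IsGeneralizedBooleanHom g)
    (hf : IsGeneralizedBooleanHom f) : IsGeneralizedBooleanHom (g ∘ f) where
  map_sup a b := by simp only [comp_apply, hf.map_sup, hg.map_sup]
  map_inf a b := by simp only [comp_apply, hf.map_inf, hg.map_inf]
  map_sdiff a b := by simp only [comp_apply, hf.map_sdiff, hg.map_sdiff]
  map_bot := by simp only [comp_apply, hf.map_bot, hg.map_bot]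

variable {f : B → C}

theorem monotone (hf : IsGeneralizedBooleanHom f) : Monotone f := fun a b hab => by
  rw [← sup_eq_right, ← hf.map_sup, sup_eq_right.2 hab]

theorem map_finset_sup (hf : IsGeneralizedBooleanHom f) {β : Type*} (s : Finset β) (u : β → B) :
    f (s.sup u) = s.sup (f ∘ u) :=
  Finset.apply_sup_eq_sup_comp f hf.map_sup hf.map_bot

theorem eq_of_eqOn (hf : IsGeneralizedBooleanHom f) {X : Set B}
    (hX : GeneratesGeneralizedBoolean X) {g : B → C} (hg : IsGeneralizedBooleanHom g)
    (h : Set.EqOn f g X) : f = g := by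
  have hT := hX {b | f b = g b} h (hf.map_bot.trans hg.map_bot.symm)
    fun a b (ha : f a = g a) (hb : f b = g b) =>
      ⟨by rw [Set.mem_ofPred_eq, hf.map_sup, hg.map_sup, ha, hb],
        by rw [Set.mem_ofPred_eq, hf.map_inf, hg.map_inf, ha, hb],
        by rw [Set.mem_ofPred_eq, hf.map_sdiff, hg.map_sdiff, ha, hb]⟩
  exact funext fun b => (Set.eq_univ_iff_forall.1 hT b :)

end IsGeneralizedBooleanHom

end Hom

section Minterm

variable {ι D : Type*} [DecidableEq ι] [GeneralizedBooleanAlgebra D]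

-- There is no top element, so minterms are cut out of a given element `w`.
def minterm (e : ι → D) (s : Finset ι) (w : D) : List ι → D
  | [] => w
  | x :: l => if x ∈ s then minterm e s w l ⊓ e x else minterm e s w l \ e x

variable (e : ι → D) (s : Finset ι) (w : D)

theorem minterm_le (l : List ι) : minterm e s w l ≤ w := by
  induction l with
  | nil => exact le_rfl
  | cons x l ih =>
    unfold minterm
    split_ifs
    exacts [inf_le_left.trans ih, sdiff_le.trans ih]

variable {e s w} {l : List ι} {x : ι}

theorem minterm_le_of_mem (hx : x ∈ l) (hs : x ∈ s) : minterm e s w l ≤ e x := by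
  induction l with
  | nil => simp at hx
  | cons y l ih =>
    unfold minterm
    obtain rfl | hx := List.mem_cons.1 hx
    · simp only [hs, if_true, inf_le_right]
    · split_ifs
      exacts [inf_le_left.trans (ih hx), sdiff_le.trans (ih hx)]

theorem disjoint_minterm_of_notMem (hx : x ∈ l) (hs : x ∉ s) :
    Disjoint (minterm e s w l) (e x) := by
  induction l with
  | nil => simp at hx
  | cons y l ih =>
    unfold minterm
    obtain rfl | hx := List.mem_cons.1 hx
    · simp only [hs, if_false, disjoint_sdiff_self_left]
    · split_ifs
      exacts [(ih hx).mono_left inf_le_left, (ih hx).mono_left sdiff_le]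

theorem minterm_congr {t : Finset ι} (h : ∀ x ∈ l, x ∈ s ↔ x ∈ t) :
    minterm e s w l = minterm e t w l := by
  induction l with
  | nil => rfl
  | cons y l ih =>
    simp only [List.forall_mem_cons] at h
    simp only [minterm, h.1, ih h.2]

theorem disjoint_minterm_of_ne {t : Finset ι} {w' : D} (hl : ∀ x, x ∈ l) (hst : s ≠ t) :
    Disjoint (minterm e s w l) (minterm e t w' l) := by
  obtain ⟨x, hxs⟩ : ∃ x, ¬(x ∈ s ↔ x ∈ t) := by
    by_contra! h
    exact hst (Finset.ext h)
  by_cases hx : x ∈ s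
  · have hxt : x ∉ t := fun hxt => hxs (iff_of_true hx hxt)
    exact (disjoint_minterm_of_notMem (hl x) hxt).symm.mono_left (minterm_le_of_mem (hl x) hx)
  · have hxt : x ∈ t := by tauto
    exact (disjoint_minterm_of_notMem (hl x) hx).mono_right (minterm_le_of_mem (hl x) hxt)

variable (e w) in
theorem sup_minterm [Fintype ι] (hl : l.Nodup) :
    (univ : Finset (Finset ι)).sup (fun s => minterm e s w l) = w := by
  induction l with
  | nil => exact sup_const univ_nonempty w
  | cons y l ih =>
    obtain ⟨hy, hl⟩ := List.nodup_cons.1 hl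
    refine le_antisymm (Finset.sup_le fun s _ => minterm_le e s w _) ?_
    conv_lhs => rw [← ih hl]
    refine Finset.sup_le fun s _ => ?_
    have hins : minterm e (insert y s) w (y :: l) = minterm e s w l ⊓ e y := by
      rw [minterm, if_pos (mem_insert_self y s)]
      congr 1
      exact minterm_congr fun x hx => by
        rw [mem_insert, or_iff_right (ne_of_mem_of_not_mem hx hy)]
    have hera : minterm e (s.erase y) w (y :: l) = minterm e s w l \ e y := by
      rw [minterm, if_neg (notMem_erase y s)]
      congr 1
      exact minterm_congr fun x hx => by
        rw [mem_erase, and_iff_right (ne_of_mem_of_not_mem hx hy)]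
    rw [← sup_inf_sdiff (minterm e s w l) (e y), ← hins, ← hera]
    exact sup_le (le_sup (f := fun s => minterm e s w (y :: l)) (mem_univ _))
      (le_sup (f := fun s => minterm e s w (y :: l)) (mem_univ _))

theorem IsGeneralizedBooleanHom.map_minterm {C : Type*} [GeneralizedBooleanAlgebra C]
    {f : D → C} (hf : IsGeneralizedBooleanHom f) (l : List ι) :
    f (minterm e s w l) = minterm (f ∘ e) s (f w) l := by
  induction l with
  | nil => rfl
  | cons y l ih =>
    unfold minterm
    split_ifs
    · rw [hf.map_inf, ih, comp_apply]
    · rw [hf.map_sdiff, ih, comp_apply]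

theorem mem_minterm {γ : Type*} [DecidableEq γ] {e : ι → Finset γ} {w : Finset γ} {z : γ} :
    z ∈ minterm e s w l ↔ z ∈ w ∧ ∀ x ∈ l, (z ∈ e x ↔ x ∈ s) := by
  induction l with
  | nil => simp [minterm]
  | cons y l ih =>
    unfold minterm
    split_ifs with hy
    · simp only [Finset.inf_eq_inter, mem_inter, ih, List.forall_mem_cons, hy, iff_true]
      tauto
    · simp only [mem_sdiff, ih, List.forall_mem_cons, hy, iff_false]
      tauto

end Minterm

section PairwiseDisjoint

variable {α D : Type*} [DecidableEq α] [GeneralizedBooleanAlgebra D] {u : α → D}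

theorem Finset.sup_sdiff_sup_of_pairwise_disjoint (hu : Pairwise (Disjoint on u))
    (s t : Finset α) : s.sup u \ t.sup u = (s \ t).sup u := by
  have hdisj : ∀ a ∉ t, Disjoint (u a) (t.sup u) := fun a ha =>
    Finset.disjoint_sup_right.2 fun b hb => hu (ne_of_mem_of_not_mem hb ha).symm
  refine le_antisymm ?_ (Finset.sup_le fun a ha => ?_)
  · rw [← Finset.sup_sdiff_right]
    refine Finset.sup_le fun a ha => ?_
    by_cases hat : a ∈ t
    · rw [sdiff_eq_bot_iff.2 (le_sup hat)]
      exact bot_le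
    · rw [(hdisj a hat).sdiff_eq_left]
      exact le_sup (mem_sdiff.2 ⟨ha, hat⟩)
  · obtain ⟨has, hat⟩ := mem_sdiff.1 ha
    exact le_sdiff.2 ⟨le_sup has, hdisj a hat⟩

theorem Finset.sup_inf_sup_of_pairwise_disjoint (hu : Pairwise (Disjoint on u))
    (s t : Finset α) : s.sup u ⊓ t.sup u = (s ∩ t).sup u := by
  rw [← sdiff_sdiff_right_self, sup_sdiff_sup_of_pairwise_disjoint hu,
    sup_sdiff_sup_of_pairwise_disjoint hu, sdiff_sdiff_right_self, Finset.inf_eq_inter]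

theorem isGeneralizedBooleanHom_finsetSup (hu : Pairwise (Disjoint on u)) :
    IsGeneralizedBooleanHom (fun s : Finset α => s.sup u) where
  map_sup _ _ := Finset.sup_union
  map_inf s t := (Finset.sup_inf_sup_of_pairwise_disjoint hu s t).symm
  map_sdiff s t := (Finset.sup_sdiff_sup_of_pairwise_disjoint hu s t).symm
  map_bot := Finset.sup_empty

end PairwiseDisjoint

section FreeAlgebra

variable {ι D : Type*} [Fintype ι] [DecidableEq ι] [GeneralizedBooleanAlgebra D]

abbrev NonemptyFinset (ι : Type*) := {s : Finset ι // s.Nonempty}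

def coordinateSet (x : ι) : Finset (NonemptyFinset ι) := {s | x ∈ s.1}

noncomputable def cell (e : ι → D) (s : NonemptyFinset ι) : D :=
  minterm e s.1 (univ.sup e) univ.toList

variable (e : ι → D)

theorem pairwise_disjoint_cell : Pairwise (Disjoint on cell e) := fun _ _ hst =>
  disjoint_minterm_of_ne (fun x => mem_toList.2 (mem_univ x)) (Subtype.coe_injective.ne hst)

theorem sup_cell_coordinateSet (x : ι) : (coordinateSet x).sup (cell e) = e x := by
  refine le_antisymm (Finset.sup_le fun s hs => ?_) ?_
  · exact minterm_le_of_mem (mem_toList.2 (mem_univ x)) (by simpa [coordinateSet] using hs)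
  · have hl : ∀ x, x ∈ (univ : Finset ι).toList := fun x => mem_toList.2 (mem_univ x)
    calc e x = e x ⊓ univ.sup e := (inf_eq_left.2 (le_sup (mem_univ x))).symm
      _ = univ.sup fun s => e x ⊓ minterm e s (univ.sup e) univ.toList := by
        rw [← sup_inf_distrib_left, sup_minterm e _ (nodup_toList _)]
      _ ≤ (coordinateSet x).sup (cell e) := Finset.sup_le fun s _ => ?_
    by_cases hx : x ∈ s
    · refine inf_le_right.trans (le_sup (f := cell e) (b := ⟨s, x, hx⟩) ?_)
      simpa [coordinateSet] using hx
    · rw [(disjoint_minterm_of_notMem (hl x) hx).symm.eq_bot]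
      exact bot_le

theorem IsGeneralizedBooleanHom.map_cell {f : D → Finset (NonemptyFinset ι)}
    (hf : IsGeneralizedBooleanHom f) (hfe : ∀ x, f (e x) = coordinateSet x)
    (s : NonemptyFinset ι) : f (cell e s) = {s} := by
  have hfe' : f ∘ e = coordinateSet := funext hfe
  have hsup : univ.sup coordinateSet = (univ : Finset (NonemptyFinset ι)) := by
    refine eq_univ_of_forall fun t => ?_
    obtain ⟨x, hx⟩ := t.2
    exact mem_sup.2 ⟨x, mem_univ x, by simpa [coordinateSet] using hx⟩
  ext t
  rw [cell, hf.map_minterm, hf.map_finset_sup, hfe', hsup, mem_minterm, mem_singleton]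
  simp only [mem_univ, mem_toList, true_and, forall_const, coordinateSet, mem_filter]
  exact ⟨fun h => Subtype.ext (Finset.ext h), fun h x => h ▸ Iff.rfl⟩

end FreeAlgebra

theorem nonempty_orderIso_of_generates {ι D : Type*} [Fintype ι] [DecidableEq ι]
    [GeneralizedBooleanAlgebra D] {e : ι → D}
    (he : GeneratesGeneralizedBoolean (Set.range e)) {f : D → Finset (NonemptyFinset ι)}
    (hf : IsGeneralizedBooleanHom f) (hfe : ∀ x, f (e x) = coordinateSet x) :
    Nonempty (D ≃o Finset (NonemptyFinset ι)) := by
  have hg := isGeneralizedBooleanHom_finsetSup (pairwise_disjoint_cell e)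
  have hgf : ∀ b, (f b).sup (cell e) = b := by
    refine congrFun ((hg.comp hf).eq_of_eqOn he IsGeneralizedBooleanHom.id ?_)
    rintro _ ⟨x, rfl⟩
    simp only [comp_apply, hfe, sup_cell_coordinateSet]
  have hfg : ∀ S : Finset (NonemptyFinset ι), f (S.sup (cell e)) = S := fun S => by
    rw [hf.map_finset_sup]
    exact (sup_congr rfl fun s _ => hf.map_cell e hfe s).trans (sup_singleton_eq_self S)
  refine ⟨⟨⟨f, fun S => S.sup (cell e), hgf, hfg⟩, fun {a b} => ⟨fun hab => ?_, (hf.monotone ·)⟩⟩⟩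
  calc a = (f a).sup (cell e) := (hgf a).symm
    _ ≤ (f b).sup (cell e) := hg.monotone hab
    _ = b := hgf b

theorem Fintype.card_nonemptyFinset (ι : Type*) [Fintype ι] :
    Fintype.card (NonemptyFinset ι) = 2 ^ Fintype.card ι - 1 := by
  classical
  rw [Fintype.card_congr (Equiv.subtypeEquivRight fun s => nonempty_iff_ne_empty),
    Fintype.card_subtype_compl, Fintype.card_finset, Fintype.card_subtype_eq]

theorem OrderIso.ncard_setOf_isAtom {α β : Type*} [PartialOrder α] [OrderBot α]
    [PartialOrder β] [OrderBot β] (E : α ≃o β) :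
    {a : α | IsAtom a}.ncard = {b : β | IsAtom b}.ncard :=
  Nat.card_congr (E.toEquiv.subtypeEquiv fun a => (E.isAtom_iff a).symm)

theorem Finset.ncard_setOf_isAtom (α : Type*) [Finite α] :
    {s : Finset α | IsAtom s}.ncard = Nat.card α := by
  have : {s : Finset α | IsAtom s} = Set.range singleton := by
    ext s
    simp [Finset.isAtom_iff, eq_comm]
  rw [this, Set.ncard_range_of_injective singleton_injective]

theorem stmt11_general (n : ℕ) (B : Type u) [GeneralizedBooleanAlgebra B]
    (X : Set B) (hX : X.Finite) (hcard : X.ncard = n)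
    (hgen : ∀ T : Set B, X ⊆ T → ⊥ ∈ T →
      (∀ a b : B, a ∈ T → b ∈ T → a ⊔ b ∈ T ∧ a ⊓ b ∈ T ∧ a \ b ∈ T) →
      T = Set.univ)
    (hfree : ∀ (C : Type u) [GeneralizedBooleanAlgebra C], ∀ g : X → C,
      ∃ f : B → C, (∀ a b : B, f (a ⊔ b) = f a ⊔ f b) ∧
        (∀ a b : B, f (a ⊓ b) = f a ⊓ f b) ∧
        (∀ a b : B, f (a \ b) = f a \ f b) ∧ f ⊥ = ⊥ ∧ ∀ x : X, f x = g x) :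
    Nat.card B = 2 ^ (2 ^ n - 1) ∧ {a : B | IsAtom a}.ncard = 2 ^ n - 1 := by
  classical
  have := hX.fintype
  obtain ⟨f, hsup, hinf, hsdiff, hbot, hfX⟩ := hfree _ (coordinateSet : X → _)
  obtain ⟨E⟩ := nonempty_orderIso_of_generates (e := Subtype.val)
    (by rwa [GeneratesGeneralizedBoolean, Subtype.range_coe]) ⟨hsup, hinf, hsdiff, hbot⟩ hfX
  have hcells : Nat.card (NonemptyFinset X) = 2 ^ n - 1 := by
    rw [Nat.card_eq_fintype_card, Fintype.card_nonemptyFinset, ← Nat.card_eq_fintype_card,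
      Nat.card_coe_set_eq, hcard]
  refine ⟨?_, ?_⟩
  · rw [Nat.card_congr E.toEquiv, Nat.card_eq_fintype_card, Fintype.card_finset,
      ← Nat.card_eq_fintype_card, hcells]
  · rw [E.ncard_setOf_isAtom, Finset.ncard_setOf_isAtom, hcells]

theorem stmt11 (n : ℕ) (hn : 1 ≤ n) (B : Type u) [GeneralizedBooleanAlgebra B]
    (X : Set B) (hX : X.Finite) (hcard : X.ncard = n)
    (hgen : ∀ T : Set B, X ⊆ T → ⊥ ∈ T →
      (∀ a b : B, a ∈ T → b ∈ T → a ⊔ b ∈ T ∧ a ⊓ b ∈ T ∧ a \ b ∈ T) →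
      T = Set.univ)
    (hfree : ∀ (C : Type u) [GeneralizedBooleanAlgebra C], ∀ g : X → C,
      ∃ f : B → C, (∀ a b : B, f (a ⊔ b) = f a ⊔ f b) ∧
        (∀ a b : B, f (a ⊓ b) = f a ⊓ f b) ∧
        (∀ a b : B, f (a \ b) = f a \ f b) ∧ f ⊥ = ⊥ ∧ ∀ x : X, f x = g x) :
    Nat.card B = 2 ^ (2 ^ n - 1) ∧ {a : B | IsAtom a}.ncard = 2 ^ n - 1 :=
  stmt11_general n B X hX hcard hgen hfree
end
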